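/- (Ideal form of the wheel conditions, second ideal.) For every k ≥ 3 and every d = (d1, …, dk) ∈ ℤ^k, the monomial shuffle element Sh_k(d) lies in the ideal of the Laurent polynomial ring R[z1^{±1}, …, zk^{±1}] generated by q2·z1 − z2 and q1·z2 − z3; that is, there exist Laurent polynomials a, b ∈ R[z1^{±1}, …, zk^{±1}] with Sh_k(d) = a·(q2·z1 − z2) + b·(q1·z2 − z3). -/

import Mathlib

open MvPolynomial Finset

noncomputable section

/-- `Fk k` is the field `F_k = ℂ(q1, q2, z1, …, zk)`, realized as the fraction field of the
polynomial ring `ℂ[q1, q2, z1, …, zk]`. -/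
abbrev Fk (k : ℕ) : Type := FractionRing (MvPolynomial (Fin 2 ⊕ Fin k) ℂ)

/-- The indeterminate `q1` in `F_k`. -/
def q1F (k : ℕ) : Fk k := algebraMap (MvPolynomial (Fin 2 ⊕ Fin k) ℂ) (Fk k) (X (Sum.inl 0))

/-- The indeterminate `q2` in `F_k`. -/
def q2F (k : ℕ) : Fk k := algebraMap (MvPolynomial (Fin 2 ⊕ Fin k) ℂ) (Fk k) (X (Sum.inl 1))

/-- The indeterminates `z1, …, zk` in `F_k` (zero-indexed: `zF k i` is `z_{i+1}`). -/
def zF (k : ℕ) (i : Fin k) : Fk k := algebraMap (MvPolynomial (Fin 2 ⊕ Fin k) ℂ) (Fk k) (X (Sum.inr i))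

/-- `ω(x, y) = (x − q·y)(y − q1·x)(y − q2·x)/(x − y)`, where `q = q1·q2`. -/
def omegaF {K : Type*} [Field K] (q1 q2 x y : K) : K :=
  (x - q1 * q2 * y) * (y - q1 * x) * (y - q2 * x) / (x - y)

/-- The monomial shuffle element
`Sh_k(d) = Σ_{σ ∈ S_k} ∏_{i=1}^k z_{σ(i)}^{d_i} · ∏_{1 ≤ i < j ≤ k} ω(z_{σ(i)}, z_{σ(j)})`,
as a rational expression in the values `z : Fin k → K`. -/
def Sh {K : Type*} [Field K] (q1 q2 : K) {k : ℕ} (z : Fin k → K) (d : Fin k → ℤ) : K :=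
  ∑ σ : Equiv.Perm (Fin k), (∏ i, z (σ i) ^ d i) *
    ∏ p ∈ Finset.univ.filter (fun p : Fin k × Fin k => p.1 < p.2),
      omegaF q1 q2 (z (σ p.1)) (z (σ p.2))

/-- The Laurent polynomial subring `R[z1^{±1}, …, zk^{±1}]` of `K`, where
`R = ℂ[q1^{±1}, q2^{±1}]`: the subring generated by the complex constants,
`q1^{±1}`, `q2^{±1}` and the `z_i^{±1}`. -/
def laurentSubring {K : Type*} [Field K] [Algebra ℂ K] (q1 q2 : K) {k : ℕ} (z : Fin k → K) :
    Subring K :=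
  Subring.closure ((Set.range fun c : ℂ => algebraMap ℂ K c) ∪ {q1, q1⁻¹, q2, q2⁻¹} ∪
    Set.range z ∪ Set.range fun i => (z i)⁻¹)

/-- The `ℂ(q1,q2)`-algebra automorphism of `F_k` fixing `q1, q2` and sending `z_i ↦ z_{τ(i)}`. -/
def permAut (k : ℕ) (τ : Equiv.Perm (Fin k)) : Fk k ≃+* Fk k :=
  IsFractionRing.ringEquivOfRingEquiv
    (MvPolynomial.renameEquiv ℂ (Equiv.sumCongr (Equiv.refl (Fin 2)) τ)).toRingEquiv

/-!
Clearing the denominators of `Sh_k(d)` by the Vandermonde product `V = ∏_{i<j} (z_i - z_j)`, and by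
a power of `z_1 ⋯ z_k` to make the exponents nonnegative, gives a polynomial `N` antisymmetric in
the `z_i`, hence divisible by `V`; so `Sh_k(d) = G / (z_1 ⋯ z_k)^M` with `G` a polynomial.
Under the specialization `z_2 = q_2 z_1`, `z_3 = q_1 q_2 z_1` every term of `N` vanishes (the wheel
condition): however `σ` orders the indices 1, 2, 3, one of the pairs (1,2), (2,3), (3,1) occurs in
increasing order, and the corresponding factor of the numerator of `ω` is zero. Since `V` does not
vanish there, `G` does, which puts `G` in the ideal `(q_2 z_1 - z_2, q_1 z_2 - z_3)`.
-/

open Equiv Function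

abbrev ltPairs (k : ℕ) : Finset (Fin k × Fin k) := univ.filter fun p => p.1 < p.2

theorem prod_ltPairs_comp_perm {R : Type*} [CommRing R] {k : ℕ} (σ : Perm (Fin k))
    {f : Fin k → Fin k → R} (hf : ∀ i j, f i j = -f j i) :
    ∏ p ∈ ltPairs k, f (σ p.1) (σ p.2) = ((σ.sign : ℤ) : R) * ∏ p ∈ ltPairs k, f p.1 p.2 := by
  have h (g : Fin k → Fin k → R) : ∏ p ∈ ltPairs k, g p.1 p.2 = ∏ i, ∏ j ∈ Ioi i, g i j :=
    prod_finset_product' _ _ _ (by simp)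
  rw [h fun i j => f (σ i) (σ j), h f, σ.prod_Ioi_comp_eq_sign_mul_prod hf]

theorem prod_ltPairs_eq_zero_of_cycle {M₀ : Type*} [CommMonoidWithZero M₀] {k : ℕ}
    {g : Fin k → Fin k → M₀} {a b c : Fin k} (hab : a ≠ b) (hbc : b ≠ c)
    (h₁ : g a b = 0) (h₂ : g b c = 0) (h₃ : g c a = 0) (σ : Perm (Fin k)) :
    ∏ p ∈ ltPairs k, g (σ p.1) (σ p.2) = 0 := by
  have vanish {i j : Fin k} (hij : σ.symm i < σ.symm j) (hg : g i j = 0) :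
      ∏ p ∈ ltPairs k, g (σ p.1) (σ p.2) = 0 :=
    prod_eq_zero (i := (σ.symm i, σ.symm j)) (by simpa using hij) (by simpa using hg)
  rcases (σ.symm.injective.ne hab).lt_or_gt with h | h
  · exact vanish h h₁
  rcases (σ.symm.injective.ne hbc).lt_or_gt with h' | h'
  · exact vanish h' h₂
  · exact vanish (h'.trans h) h₃

namespace MvPolynomial

variable {R σ : Type*} [CommRing R]

theorem sub_algHom_mem_span_X_sub (ψ : MvPolynomial σ R →ₐ[R] MvPolynomial σ R)
    (f : MvPolynomial σ R) : f - ψ f ∈ Ideal.span (Set.range fun i => X i - ψ (X i)) := by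
  set J := Ideal.span (Set.range fun i => (X i - ψ (X i) : MvPolynomial σ R))
  have h : (Ideal.Quotient.mkₐ R J).comp ψ = Ideal.Quotient.mkₐ R J :=
    algHom_ext fun i => Ideal.Quotient.eq.mpr <| by
      rw [← neg_sub]
      exact neg_mem (Ideal.subset_span ⟨i, rfl⟩)
  rw [← Ideal.Quotient.eq]
  exact (AlgHom.congr_fun h f).symm

variable [DecidableEq σ]

theorem X_sub_X_dvd_iff_rename_update_eq_zero {a b : σ} {f : MvPolynomial σ R} :
    X a - X b ∣ f ↔ rename (update id b a) f = 0 := by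
  constructor
  · rintro ⟨g, rfl⟩
    rw [map_mul, map_sub, rename_X, rename_X, update_self, update_apply]
    simp
  · intro hf
    have hmem := sub_algHom_mem_span_X_sub (rename (update id b a)) f
    rw [hf, sub_zero] at hmem
    rw [← Ideal.mem_span_singleton]
    refine Ideal.span_le.mpr ?_ hmem
    rintro _ ⟨i, rfl⟩
    by_cases hi : i = b
    · subst hi
      simp only [SetLike.mem_coe, rename_X, update_self, ← neg_sub (X a)]
      exact neg_mem (Ideal.mem_span_singleton_self _)
    · simp [hi]

theorem X_sub_X_dvd_X_sub_X_iff [Nontrivial R] {a b c d : σ} :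
    (X a - X b : MvPolynomial σ R) ∣ X c - X d ↔ update id b a c = update id b a d := by
  rw [X_sub_X_dvd_iff_rename_update_eq_zero]
  simp [sub_eq_zero, X_injective.eq_iff]

theorem prime_X_sub_X [IsDomain R] {a b : σ} (hab : a ≠ b) :
    Prime (X a - X b : MvPolynomial σ R) := by
  have hker : Ideal.span {X a - X b} = RingHom.ker (rename (R := R) (update id b a)) := by
    ext f
    rw [Ideal.mem_span_singleton, RingHom.mem_ker, X_sub_X_dvd_iff_rename_update_eq_zero]
  rw [← Ideal.span_singleton_prime (sub_ne_zero.mpr (X_injective.ne hab)), hker]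
  exact RingHom.ker_isPrime _

theorem X_sub_X_dvd_of_rename_swap [IsDomain R] [CharZero R] {a b : σ} {f : MvPolynomial σ R}
    (hf : rename (swap a b) f = -f) : X a - X b ∣ f := by
  have hcomp : update id b a ∘ swap a b = update id b a := by
    ext i
    simp only [comp_apply, swap_apply_def, update_apply, id]
    split_ifs <;> simp_all
  have h := congrArg (rename (R := R) (update id b a)) hf
  rw [rename_rename, hcomp, map_neg, CharZero.eq_neg_self_iff] at h
  exact X_sub_X_dvd_iff_rename_update_eq_zero.mpr h

theorem prod_X_sub_X_dvd_of_rename_swap {K : Type*} [Field K] [CharZero K] {k : ℕ} {ι : Fin k → σ}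
    (hι : Injective ι) {f : MvPolynomial σ K}
    (hf : ∀ a b, a ≠ b → rename (swap (ι a) (ι b)) f = -f) :
    ∏ p ∈ ltPairs k, (X (ι p.1) - X (ι p.2)) ∣ f := by
  refine prod_dvd_of_isRelPrime (fun p hp q hq hpq => ?_) fun p hp => ?_
  · simp only [coe_filter, mem_univ, true_and, Set.mem_ofPred_eq] at hp hq
    rw [onFun, (prime_X_sub_X (hι.ne hp.ne)).irreducible.isRelPrime_iff_not_dvd,
      X_sub_X_dvd_X_sub_X_iff]
    -- `update id (ι p.2) (ι p.1)` identifies no two variables other than `ι p.1` and `ι p.2`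
    simp only [update_apply, id, hι.eq_iff]
    grind
  · simp only [mem_filter, mem_univ, true_and] at hp
    exact X_sub_X_dvd_of_rename_swap (hf _ _ hp.ne)

end MvPolynomial

section ShuffleNumerator

variable {A : Type*} [CommRing A] {k : ℕ}

def omegaNum (q1 q2 x y : A) : A :=
  (x - q1 * q2 * y) * (y - q1 * x) * (y - q2 * x)

def shuffleNumerator (q1 q2 : A) (z : Fin k → A) (e : Fin k → ℕ) : A :=
  ∑ σ : Perm (Fin k), ((σ.sign : ℤ) : A) *
    ((∏ i, z (σ i) ^ e i) * ∏ p ∈ ltPairs k, omegaNum q1 q2 (z (σ p.1)) (z (σ p.2)))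

theorem map_shuffleNumerator {B : Type*} [CommRing B] (f : A →+* B) (q1 q2 : A) (z : Fin k → A)
    (e : Fin k → ℕ) :
    f (shuffleNumerator q1 q2 z e) = shuffleNumerator (f q1) (f q2) (fun i => f (z i)) e := by
  simp [shuffleNumerator, omegaNum, map_sum, map_prod]

theorem shuffleNumerator_comp_perm (q1 q2 : A) (z : Fin k → A) (e : Fin k → ℕ)
    (τ : Perm (Fin k)) :
    shuffleNumerator q1 q2 (z ∘ τ) e = ((τ.sign : ℤ) : A) * shuffleNumerator q1 q2 z e := by
  rw [shuffleNumerator, shuffleNumerator, mul_sum]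
  refine Fintype.sum_equiv (Equiv.mulLeft τ) _ _ fun σ => ?_
  have hsign : σ.sign = τ.sign * (τ * σ).sign := by
    rw [Perm.sign_mul, ← mul_assoc, Int.units_mul_self, one_mul]
  simp only [hsign, Units.val_mul, Int.cast_mul, comp_apply, Equiv.coe_mulLeft, Perm.mul_apply,
    mul_assoc]

theorem shuffleNumerator_eq_zero_of_wheel {q1 q2 : A} {z : Fin k → A} {a b c : Fin k}
    (hab : a ≠ b) (hbc : b ≠ c) (hb : z b = q2 * z a) (hc : z c = q1 * z b) (e : Fin k → ℕ) :
    shuffleNumerator q1 q2 z e = 0 := by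
  refine sum_eq_zero fun σ _ => mul_eq_zero_of_right _ (mul_eq_zero_of_right _ ?_)
  refine prod_ltPairs_eq_zero_of_cycle (g := fun i j => omegaNum q1 q2 (z i) (z j)) hab hbc
    ?_ ?_ ?_ σ <;> simp only [omegaNum, hb, hc] <;> ring

end ShuffleNumerator

section ShuffleElement

variable {K : Type*} [Field K] {k : ℕ}

theorem Sh_mul_prod_sub (q1 q2 : K) {z : Fin k → K} (hz : Injective z) (e : Fin k → ℕ) :
    Sh q1 q2 z (fun i => e i) * ∏ p ∈ ltPairs k, (z p.1 - z p.2) = shuffleNumerator q1 q2 z e := by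
  have hV : ∏ p ∈ ltPairs k, (z p.1 - z p.2) ≠ 0 :=
    prod_ne_zero_iff.mpr fun p hp => sub_ne_zero.mpr (hz.ne (mem_filter.mp hp).2.ne)
  rw [Sh, shuffleNumerator, sum_mul]
  refine Fintype.sum_congr _ _ fun σ => ?_
  have hden : ∏ p ∈ ltPairs k, (z (σ p.1) - z (σ p.2))
      = ((σ.sign : ℤ) : K) * ∏ p ∈ ltPairs k, (z p.1 - z p.2) :=
    prod_ltPairs_comp_perm σ fun i j => (neg_sub (z j) (z i)).symm
  have hω : ∏ p ∈ ltPairs k, omegaF q1 q2 (z (σ p.1)) (z (σ p.2))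
      = (∏ p ∈ ltPairs k, omegaNum q1 q2 (z (σ p.1)) (z (σ p.2)))
        / (((σ.sign : ℤ) : K) * ∏ p ∈ ltPairs k, (z p.1 - z p.2)) := by
    rw [← hden, ← prod_div_distrib]
    rfl
  simp only [zpow_natCast]
  rw [hω]
  rcases Int.units_eq_one_or σ.sign with h | h <;>
    · simp only [h, Units.val_one, Units.val_neg, Int.cast_one, Int.cast_neg]
      field_simp

theorem Sh_add_const (q1 q2 : K) {z : Fin k → K} (hz : ∀ i, z i ≠ 0) (d : Fin k → ℤ) (n : ℤ) :
    Sh q1 q2 z (fun i => d i + n) = (∏ i, z i) ^ n * Sh q1 q2 z d := by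
  rw [Sh, Sh, mul_sum]
  refine Fintype.sum_congr _ _ fun σ => ?_
  have hmono : ∏ i, z (σ i) ^ (d i + n) = (∏ i, z i) ^ n * ∏ i, z (σ i) ^ d i := by
    simp only [zpow_add₀ (hz _), prod_mul_distrib, prod_zpow, Equiv.prod_comp σ z, mul_comm]
  rw [hmono, mul_assoc]

theorem exists_Sh_eq_prod_inv_pow_mul (q1 q2 : K) {z : Fin k → K} (hz : ∀ i, z i ≠ 0)
    (d : Fin k → ℤ) :
    ∃ (M : ℕ) (e : Fin k → ℕ), Sh q1 q2 z d = (∏ i, (z i)⁻¹) ^ M * Sh q1 q2 z fun i => e i := by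
  set M := ∑ i, (d i).natAbs
  have hM (i : Fin k) : 0 ≤ d i + M := by
    have := single_le_sum (fun j _ => Nat.zero_le (d j).natAbs) (mem_univ i)
    omega
  refine ⟨M, fun i => (d i + M).toNat, ?_⟩
  simp only [Int.toNat_of_nonneg (hM _), Sh_add_const q1 q2 hz, zpow_natCast, prod_inv_distrib,
    inv_pow, ← mul_assoc]
  rw [inv_mul_cancel₀ (pow_ne_zero _ (prod_ne_zero_iff.mpr fun i _ => hz i)), one_mul]

end ShuffleElement

section GenericPoint

variable (k : ℕ)

abbrev Pk : Type := MvPolynomial (Fin 2 ⊕ Fin k) ℂ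

def q1P : Pk k := X (.inl 0)

def q2P : Pk k := X (.inl 1)

def zP (i : Fin k) : Pk k := X (.inr i)

theorem algebraMap_mem_laurentSubring (f : Pk k) :
    algebraMap (Pk k) (Fk k) f ∈ laurentSubring (q1F k) (q2F k) (zF k) := by
  induction f using MvPolynomial.induction_on with
  | C c =>
    rw [← algebraMap_eq, ← IsScalarTower.algebraMap_apply]
    exact Subring.subset_closure (.inl (.inl (.inl ⟨c, rfl⟩)))
  | add f g hf hg => exact map_add (algebraMap (Pk k) (Fk k)) f g ▸ add_mem hf hg
  | mul_X f v hf =>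
    refine map_mul (algebraMap (Pk k) (Fk k)) f (X v) ▸ mul_mem hf (Subring.subset_closure ?_)
    rcases v with j | i
    · fin_cases j
      · exact .inl (.inl (.inr (.inl rfl)))
      · exact .inl (.inl (.inr (.inr (.inr (.inl rfl)))))
    · exact .inl (.inr ⟨i, rfl⟩)

theorem algebraMap_q1P : algebraMap (Pk k) (Fk k) (q1P k) = q1F k := rfl

theorem algebraMap_q2P : algebraMap (Pk k) (Fk k) (q2P k) = q2F k := rfl

theorem algebraMap_zP (i : Fin k) : algebraMap (Pk k) (Fk k) (zP k i) = zF k i := rfl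

theorem zF_injective : Injective (zF k) :=
  (IsFractionRing.injective (Pk k) (Fk k)).comp (X_injective.comp Sum.inr_injective)

theorem zF_ne_zero (i : Fin k) : zF k i ≠ 0 :=
  (map_ne_zero_iff _ (IsFractionRing.injective (Pk k) (Fk k))).mpr (X_ne_zero _)

theorem prod_zP_sub_dvd_shuffleNumerator (e : Fin k → ℕ) :
    ∏ p ∈ ltPairs k, (zP k p.1 - zP k p.2) ∣ shuffleNumerator (q1P k) (q2P k) (zP k) e := by
  refine prod_X_sub_X_dvd_of_rename_swap Sum.inr_injective fun a b hab => ?_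
  have hq (j : Fin 2) : swap (Sum.inr a : Fin 2 ⊕ Fin k) (.inr b) (.inl j) = .inl j :=
    swap_apply_of_ne_of_ne Sum.inl_ne_inr Sum.inl_ne_inr
  have hz : (fun i => rename (swap (Sum.inr a) (Sum.inr b)) (zP k i)) = zP k ∘ swap a b := by
    ext i
    simp [zP, Sum.inr_injective.swap_apply]
  rw [← AlgHom.coe_toRingHom, map_shuffleNumerator, AlgHom.coe_toRingHom, hz,
    shuffleNumerator_comp_perm, Perm.sign_swap hab]
  simp [q1P, q2P, hq]

end GenericPoint

section Specialization

variable {m : ℕ}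

def wheelSpecialization (m : ℕ) : Fin 2 ⊕ Fin (m + 3) → Pk (m + 3) :=
  update (update X (.inr 1) (q2P _ * zP _ 0)) (.inr 2) (q1P _ * (q2P _ * zP _ 0))

theorem fin_zero_ne_one : (0 : Fin (m + 3)) ≠ 1 := by simp

theorem fin_one_ne_two : (1 : Fin (m + 3)) ≠ 2 := by
  simp [Fin.ext_iff, Nat.mod_eq_of_lt (by omega : 2 < m + 3)]

theorem fin_zero_ne_two : (0 : Fin (m + 3)) ≠ 2 := by
  simp [Fin.ext_iff, Nat.mod_eq_of_lt (by omega : 2 < m + 3)]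

theorem aeval_wheelSpecialization_shuffleNumerator (e : Fin (m + 3) → ℕ) :
    aeval (wheelSpecialization m) (shuffleNumerator (q1P _) (q2P _) (zP _) e) = 0 := by
  rw [← AlgHom.coe_toRingHom, map_shuffleNumerator]
  refine shuffleNumerator_eq_zero_of_wheel fin_zero_ne_one fin_one_ne_two ?_ ?_ e <;>
    simp [wheelSpecialization, q1P, q2P, zP, fin_zero_ne_two, fin_one_ne_two]

theorem mem_span_of_aeval_wheelSpecialization_eq_zero {G : Pk (m + 3)}
    (hG : aeval (wheelSpecialization m) G = 0) :
    G ∈ Ideal.span {q2P _ * zP _ 0 - zP _ 1, q1P _ * zP _ 1 - zP _ 2} := by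
  have hmem := sub_algHom_mem_span_X_sub (aeval (wheelSpecialization m)) G
  rw [hG, sub_zero] at hmem
  refine Ideal.span_le.mpr ?_ hmem
  rintro _ ⟨t, rfl⟩
  simp only [aeval_X, SetLike.mem_coe]
  by_cases h2 : t = .inr 2
  · subst h2
    exact Ideal.mem_span_pair.mpr ⟨-q1P _, -1, by simp [wheelSpecialization, zP]; ring⟩
  by_cases h1 : t = .inr 1
  · subst h1
    exact Ideal.mem_span_pair.mpr ⟨-1, 0, by
      simp [wheelSpecialization, zP, fin_one_ne_two]⟩
  · simp [wheelSpecialization, h1, h2]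

theorem aeval_wheelSpecialization_prod_ne_zero :
    aeval (wheelSpecialization m) (∏ p ∈ ltPairs (m + 3), (zP _ p.1 - zP _ p.2)) ≠ 0 := by
  -- a point of the locus `z 1 = q₂ * z 0`, `z 2 = q₁ * z 1` at which the `z i` are distinct
  set pt : Fin 2 ⊕ Fin (m + 3) → ℂ := Sum.elim (fun _ => 2) fun i => 2 ^ (i : ℕ)
  have hpt : (aeval pt).comp (aeval (wheelSpecialization m)) = aeval pt := by
    refine algHom_ext fun t => ?_
    by_cases h2 : t = .inr 2
    · subst h2
      norm_num [wheelSpecialization, q1P, q2P, zP, pt, Nat.mod_eq_of_lt (by omega : 2 < m + 3)]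
    by_cases h1 : t = .inr 1
    · subst h1
      simp [wheelSpecialization, q2P, zP, pt, fin_one_ne_two]
    · simp [wheelSpecialization, h1, h2]
  intro h
  have h' := congrArg (aeval pt) h
  rw [← AlgHom.comp_apply, hpt, map_zero, map_prod, prod_eq_zero_iff] at h'
  obtain ⟨p, hp, hzero⟩ := h'
  have hlt : (p.1 : ℕ) ≠ p.2 := Fin.val_ne_of_ne (mem_filter.mp hp).2.ne
  apply hlt
  simp only [zP, map_sub, aeval_X, pt, Sum.elim_inr, sub_eq_zero] at hzero
  exact Nat.pow_right_injective le_rfl (by exact_mod_cast hzero)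

theorem exists_mem_span_algebraMap_eq_Sh (e : Fin (m + 3) → ℕ) :
    ∃ G ∈ Ideal.span {q2P (m + 3) * zP (m + 3) 0 - zP (m + 3) 1,
        q1P (m + 3) * zP (m + 3) 1 - zP (m + 3) 2},
      algebraMap (Pk (m + 3)) (Fk (m + 3)) G = Sh (q1F (m + 3)) (q2F (m + 3)) (zF (m + 3))
        fun i => e i := by
  obtain ⟨G, hG⟩ := prod_zP_sub_dvd_shuffleNumerator (m + 3) e
  refine ⟨G, mem_span_of_aeval_wheelSpecialization_eq_zero ?_, ?_⟩
  · refine (mul_eq_zero.mp ?_).resolve_left aeval_wheelSpecialization_prod_ne_zero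
    rw [← map_mul, ← hG, aeval_wheelSpecialization_shuffleNumerator]
  · have hφ := congrArg (algebraMap (Pk (m + 3)) (Fk (m + 3))) hG
    simp only [map_shuffleNumerator, map_mul, map_prod, map_sub, algebraMap_q1P, algebraMap_q2P,
      algebraMap_zP, ← Sh_mul_prod_sub _ _ (zF_injective _)] at hφ
    refine mul_left_cancel₀ (prod_ne_zero_iff.mpr fun p hp => ?_) (hφ.symm.trans (mul_comm _ _))
    exact sub_ne_zero.mpr ((zF_injective _).ne (mem_filter.mp hp).2.ne)

end Specialization

/-- Ideal form of the wheel conditions, second ideal: for every `k ≥ 3` (written `k = m + 3`)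
and `d ∈ ℤ^k`, there are Laurent polynomials `a, b ∈ R[z1^{±1}, …, zk^{±1}]` with
`Sh_k(d) = a·(q2·z1 − z2) + b·(q1·z2 − z3)`. -/
theorem sh_mem_wheel_ideal_two (m : ℕ) (d : Fin (m + 3) → ℤ) :
    ∃ a b : Fk (m + 3),
      a ∈ laurentSubring (q1F (m + 3)) (q2F (m + 3)) (zF (m + 3)) ∧
      b ∈ laurentSubring (q1F (m + 3)) (q2F (m + 3)) (zF (m + 3)) ∧
      Sh (q1F (m + 3)) (q2F (m + 3)) (zF (m + 3)) d =
        a * (q2F (m + 3) * zF (m + 3) 0 - zF (m + 3) 1)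
          + b * (q1F (m + 3) * zF (m + 3) 1 - zF (m + 3) 2) := by
  obtain ⟨M, e, hSh⟩ := exists_Sh_eq_prod_inv_pow_mul (q1F _) (q2F _) (zF_ne_zero (m + 3)) d
  obtain ⟨G, hG, hGSh⟩ := exists_mem_span_algebraMap_eq_Sh e
  obtain ⟨A, B, rfl⟩ := Ideal.mem_span_pair.mp hG
  set u := (∏ i, (zF (m + 3) i)⁻¹) ^ M
  have hu : u ∈ laurentSubring (q1F (m + 3)) (q2F (m + 3)) (zF (m + 3)) :=
    pow_mem (prod_mem fun i _ => Subring.subset_closure (.inr ⟨i, rfl⟩)) M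
  refine ⟨u * algebraMap _ _ A, u * algebraMap _ _ B,
    mul_mem hu (algebraMap_mem_laurentSubring _ A), mul_mem hu (algebraMap_mem_laurentSubring _ B),
    ?_⟩
  rw [hSh, ← hGSh]
  simp only [map_add, map_mul, map_sub, algebraMap_q1P, algebraMap_q2P, algebraMap_zP]
  ring

end
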